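/- arXiv:2203.02883 — 10 statements merged into one kernel-verified Lean document; each statement's English description precedes it below -/
import Mathlib

section
/- Let p(ρ) = min{2ρ, 1}. For any real ρ_i with 0 ≤ ρ_i ≤ 1 and any finite family of nonnegative reals (ρ_ij)_{j ∈ J} with Σ_j ρ_ij = ρ_i, we have p(ρ_i) − ρ_i ≥ (1/2) Σ_j ( p(ρ_i) − p(ρ_i − ρ_ij) − max(2ρ_ij − 1, 0) ). -/
open Finset

theorem top_half_sampling_p_ineq
    {J : Type*} (S : Finset J)
    (p : ℝ → ℝ) (hp : ∀ ρ, p ρ = min (2 * ρ) 1)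
    (ρi : ℝ) (hρi0 : 0 ≤ ρi) (hρi1 : ρi ≤ 1)
    (ρ : J → ℝ) (hρ : ∀ j ∈ S, 0 ≤ ρ j)
    (hsum : ∑ j ∈ S, ρ j = ρi) :
    p ρi - ρi ≥
      (1 / 2) * ∑ j ∈ S, (p ρi - p (ρi - ρ j) - max (2 * ρ j - 1) 0) := by
  classical
  have hle : ∀ j ∈ S, ρ j ≤ ρi := by
    intro j hj
    rw [← hsum]
    exact Finset.single_le_sum hρ hj
  rcases le_or_gt ρi (1/2) with h | h
  · -- Case ρi ≤ 1/2: each term equals 2 ρ j, equality holds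
    have hpi : p ρi = 2 * ρi := by rw [hp]; exact min_eq_left (by linarith)
    have hterm : ∀ j ∈ S, p ρi - p (ρi - ρ j) - max (2 * ρ j - 1) 0 = 2 * ρ j := by
      intro j hj
      have h1 : ρ j ≤ ρi := hle j hj
      have h0 : 0 ≤ ρ j := hρ j hj
      have hpj : p (ρi - ρ j) = 2 * (ρi - ρ j) := by
        rw [hp]; exact min_eq_left (by linarith)
      have hmax : max (2 * ρ j - 1) 0 = 0 := max_eq_right (by linarith)
      rw [hpi, hpj, hmax]; ring
    rw [Finset.sum_congr rfl hterm, ← Finset.mul_sum, hsum, hpi]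
    linarith
  · -- Case ρi > 1/2: p ρi = 1
    have hpi : p ρi = 1 := by rw [hp]; exact min_eq_right (by linarith)
    have key : ∑ j ∈ S, (p ρi - p (ρi - ρ j) - max (2 * ρ j - 1) 0) ≤ 2 - 2 * ρi := by
      by_cases hbig : ∃ j0 ∈ S, 1/2 < ρ j0
      · -- some big element j0
        obtain ⟨j0, hj0, hb⟩ := hbig
        rw [← Finset.add_sum_erase _ _ hj0]
        have ht0 : p ρi - p (ρi - ρ j0) - max (2 * ρ j0 - 1) 0 = 2 - 2 * ρi := by
          have hpj : p (ρi - ρ j0) = 2 * (ρi - ρ j0) := by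
            rw [hp]; exact min_eq_left (by linarith)
          have hmax : max (2 * ρ j0 - 1) 0 = 2 * ρ j0 - 1 := max_eq_left (by linarith)
          rw [hpi, hpj, hmax]; ring
        have hrest : ∑ j ∈ S.erase j0, (p ρi - p (ρi - ρ j) - max (2 * ρ j - 1) 0) ≤ 0 := by
          apply Finset.sum_nonpos
          intro j hj
          have hjS : j ∈ S := Finset.mem_of_mem_erase hj
          have h2 : ρ j + ρ j0 ≤ ρi := by
            have : ρ j ≤ ∑ i ∈ S.erase j0, ρ i :=
              Finset.single_le_sum (fun i hi => hρ i (Finset.mem_of_mem_erase hi)) hj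
            have hsplit : ρ j0 + ∑ i ∈ S.erase j0, ρ i = ρi := by
              rw [Finset.add_sum_erase _ _ hj0, hsum]
            linarith
          have hpj : p (ρi - ρ j) = 1 := by
            rw [hp]; exact min_eq_right (by linarith)
          rw [hpi, hpj]
          have := le_max_right (2 * ρ j - 1) 0
          linarith
        linarith
      · -- all ρ j ≤ 1/2
        push_neg at hbig
        set c : ℝ := 2 * ρi - 1 with hc
        have hc0 : 0 < c := by simp [hc]; linarith
        have hc1 : c ≤ 1 := by simp [hc]; linarith
        have hterm : ∀ j ∈ S, p ρi - p (ρi - ρ j) - max (2 * ρ j - 1) 0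
            = max (2 * ρ j - c) 0 := by
          intro j hj
          have h0 : 0 ≤ ρ j := hρ j hj
          have h1 : ρ j ≤ 1/2 := hbig j hj
          have hmax : max (2 * ρ j - 1) 0 = 0 := max_eq_right (by linarith)
          rw [hpi, hmax, hp, hc, sub_zero]
          rcases le_total (2 * (ρi - ρ j)) 1 with hcase | hcase
          · rw [min_eq_left hcase, max_eq_left (by linarith)]; ring
          · rw [min_eq_right hcase, max_eq_right (by linarith)]; ring
        rw [Finset.sum_congr rfl hterm]
        set A := S.filter (fun j => c < 2 * ρ j) with hA
        have hsplit : ∑ j ∈ S, max (2 * ρ j - c) 0 = ∑ j ∈ A, (2 * ρ j - c) := by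
          rw [hA, ← Finset.sum_filter_add_sum_filter_not S (fun j => c < 2 * ρ j)]
          have h1 : ∑ j ∈ S.filter (fun j => c < 2 * ρ j), max (2 * ρ j - c) 0
              = ∑ j ∈ S.filter (fun j => c < 2 * ρ j), (2 * ρ j - c) := by
            apply Finset.sum_congr rfl
            intro j hj
            have := (Finset.mem_filter.mp hj).2
            exact max_eq_left (by linarith)
          have h2 : ∑ j ∈ S.filter (fun j => ¬ c < 2 * ρ j), max (2 * ρ j - c) 0 = 0 := by
            apply Finset.sum_eq_zero
            intro j hj
            have := (Finset.mem_filter.mp hj).2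
            push_neg at this
            exact max_eq_right (by linarith)
          rw [h1, h2, add_zero]
        rw [hsplit]
        have hsumA : ∑ j ∈ A, ρ j ≤ ρi := by
          rw [← hsum]
          exact Finset.sum_le_sum_of_subset_of_nonneg (Finset.filter_subset _ _)
            (fun j hj _ => hρ j hj)
        rcases Nat.lt_or_ge A.card 2 with hcard | hcard
        · -- at most one element in A
          have hbound : ∀ j ∈ A, 2 * ρ j - c ≤ 1 - c := by
            intro j hj
            have := hbig j (Finset.mem_of_mem_filter j hj)
            linarith
          calc ∑ j ∈ A, (2 * ρ j - c) ≤ A.card • (1 - c) :=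
                Finset.sum_le_card_nsmul A _ _ hbound
            _ = (A.card : ℝ) * (1 - c) := by simp [nsmul_eq_mul]
            _ ≤ 1 * (1 - c) := by
                apply mul_le_mul_of_nonneg_right _ (by linarith)
                exact_mod_cast Nat.le_of_lt_succ hcard
            _ = 2 - 2 * ρi := by rw [hc]; ring
        · -- at least two elements in A
          have hAsum : ∑ j ∈ A, (2 * ρ j - c) = 2 * (∑ j ∈ A, ρ j) - A.card * c := by
            rw [Finset.sum_sub_distrib, ← Finset.mul_sum, Finset.sum_const, nsmul_eq_mul]
          rw [hAsum]
          have : (2 : ℝ) ≤ (A.card : ℝ) := by exact_mod_cast hcard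
          nlinarith [hsumA, hc0]
    linarith [key]
end

section
/- Suppose nonnegative reals (λ_i)_{i∈I} and (x_{ij})_{(i,j)∈E} satisfy: for every convex f : [0,1] → ℝ with f(0) = 0 and every j, Σ_i λ_i f(x_{ij}/λ_i) ≤ ∫_0^{−ln(1−x_j)} f(e^{−λ}) dλ, where x_j = Σ_i x_{ij} < 1. Then for every j, Σ_i max(x_{ij} − λ_i/2, 0) ≤ (1 − ln 2)/2. -/
/-! Test the hypothesis on `f t = max (t - 1/2) 0`. Its perspective `λ f (x/λ)` is
`max (x - λ/2) 0`, while `max (e^{-l} - 1/2) 0` is nonnegative and vanishes for `l ≥ ln 2`,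
so the right-hand integral never exceeds `∫₀^{ln 2} (e^{-l} - 1/2) dl = (1 - ln 2)/2`,
whatever its upper limit. -/

open Finset intervalIntegral Real

theorem convexOn_max_sub_zero (c : ℝ) : ConvexOn ℝ Set.univ fun t : ℝ => max (t - c) 0 :=
  ((convexOn_id convex_univ).sub (concaveOn_const c convex_univ)).sup
    (convexOn_const 0 convex_univ)

theorem mul_max_div_sub_zero {a : ℝ} (ha : 0 < a) (y c : ℝ) :
    a * max (y / a - c) 0 = max (y - a * c) 0 := by
  rw [mul_max_of_nonneg _ _ ha.le, mul_zero, mul_sub, mul_div_cancel₀ _ ha.ne']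

theorem intervalIntegral_le_of_eq_zero_of_le {g : ℝ → ℝ} {a : ℝ} (hg : Continuous g)
    (hg0 : ∀ l, 0 ≤ g l) (hga : ∀ l, a ≤ l → g l = 0) (b T : ℝ) :
    ∫ l in b..T, g l ≤ ∫ l in b..a, g l := by
  rw [← integral_add_adjacent_intervals (hg.intervalIntegrable b a) (hg.intervalIntegrable a T)]
  suffices ∫ l in a..T, g l ≤ 0 by linarith
  rcases le_total a T with haT | hTa
  · rw [integral_congr (g := fun _ => 0) fun l hl => hga l (Set.uIcc_of_le haT ▸ hl).1,
      integral_zero]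
  · rw [integral_symm, neg_nonpos]
    exact integral_nonneg hTa fun l _ => hg0 l

theorem integral_exp_neg_sub_const (a c : ℝ) :
    ∫ l in (0:ℝ)..a, (exp (-l) - c) = 1 - exp (-a) - c * a := by
  rw [integral_sub ((by fun_prop : Continuous fun l => exp (-l)).intervalIntegrable 0 a)
      intervalIntegrable_const, integral_comp_neg (fun l => exp l), integral_exp, integral_const,
    neg_zero, exp_zero, sub_zero, smul_eq_mul, mul_comm]

theorem integral_max_exp_neg_sub_le {c : ℝ} (hc0 : 0 < c) (hc1 : c ≤ 1) (T : ℝ) :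
    ∫ l in (0:ℝ)..T, max (exp (-l) - c) 0 ≤ 1 - c + c * log c := by
  have hsub : ∀ l, exp (-l) - c ≤ 0 ↔ -log c ≤ l := fun l => by
    rw [sub_nonpos, ← le_log_iff_exp_le hc0, neg_le]
  calc ∫ l in (0:ℝ)..T, max (exp (-l) - c) 0
      ≤ ∫ l in (0:ℝ)..(-log c), max (exp (-l) - c) 0 :=
        intervalIntegral_le_of_eq_zero_of_le (by fun_prop) (fun l => le_max_right _ _)
          (fun l hl => max_eq_right ((hsub l).2 hl)) 0 T
    _ = ∫ l in (0:ℝ)..(-log c), (exp (-l) - c) := by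
        refine integral_congr fun l hl => max_eq_left ?_
        rw [Set.uIcc_of_le (neg_nonneg.2 (log_nonpos hc0.le hc1))] at hl
        exact sub_nonneg.2 ((log_le_iff_le_exp hc0).1 (le_neg.1 hl.2))
    _ = 1 - c + c * log c := by rw [integral_exp_neg_sub_const, neg_neg, exp_log hc0]; ring

theorem converse_jensen_corollary_general
    {I J : Type*} [Fintype I]
    (lam : I → ℝ) (hlam : ∀ i, 0 < lam i)
    (x : I → J → ℝ)
    (hCJ : ∀ f : ℝ → ℝ, ConvexOn ℝ (Set.Icc 0 1) f → f 0 = 0 → ∀ j,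
      ∑ i, lam i * f (x i j / lam i) ≤
        ∫ l in (0:ℝ)..(-Real.log (1 - ∑ i, x i j)), f (Real.exp (-l))) :
    ∀ j, ∑ i, max (x i j - lam i / 2) 0 ≤ (1 - Real.log 2) / 2 := by
  intro j
  calc ∑ i, max (x i j - lam i / 2) 0
      = ∑ i, lam i * max (x i j / lam i - 1 / 2) 0 :=
        sum_congr rfl fun i _ => by rw [mul_max_div_sub_zero (hlam i), mul_one_div]
    _ ≤ ∫ l in (0:ℝ)..(-log (1 - ∑ i, x i j)), max (exp (-l) - 1 / 2) 0 :=
        hCJ _ ((convexOn_max_sub_zero _).subset (Set.subset_univ _) (convex_Icc 0 1))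
          (by norm_num) j
    _ ≤ 1 - 1 / 2 + 1 / 2 * log (1 / 2) :=
        integral_max_exp_neg_sub_le (by norm_num) (by norm_num) _
    _ = (1 - log 2) / 2 := by rw [one_div, log_inv]; ring

theorem converse_jensen_corollary
    {I J : Type*} [Fintype I] [Fintype J]
    (lam : I → ℝ) (hlam : ∀ i, 0 < lam i)
    (x : I → J → ℝ) (hx : ∀ i j, 0 ≤ x i j)
    (hxj : ∀ j, ∑ i, x i j < 1)
    (hCJ : ∀ f : ℝ → ℝ, ConvexOn ℝ (Set.Icc 0 1) f → f 0 = 0 → ∀ j,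
      ∑ i, lam i * f (x i j / lam i) ≤
        ∫ l in (0:ℝ)..(-Real.log (1 - ∑ i, x i j)), f (Real.exp (-l))) :
    ∀ j, ∑ i, max (x i j - lam i / 2) 0 ≤ (1 - Real.log 2) / 2 :=
  converse_jensen_corollary_general lam hlam x hCJ
end

section
/- (Jensen Inequality for DR submodular functions on ordered points) Let f : [0,1]^d → ℝ be a C² function all of whose second partial derivatives are nonpositive (DR submodular), and let y : [0,1] → [0,1]^d be an integrable function that is monotone: for all 0 ≤ μ < μ' ≤ 1, y(μ) ≤ y(μ') coordinatewise. Then ∫_0^1 f(y(μ)) dμ ≤ f(∫_0^1 y(μ) dμ). -/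
/-!
Write `f ȳ - f (y μ) = ∫₀¹ ∇f(z_t μ) · (ȳ - y μ) dt` with `z_t μ = y μ + t (ȳ - y μ)` and swap the
two integrals. For fixed `t` the path `z_t` is monotone in `μ`, so, the Hessian being entrywise
nonpositive, every partial derivative `∂ₖ f (z_t μ)` is antitone in `μ`; and `ȳₖ - yₖ μ` is antitone
with mean zero. Chebyshev's integral inequality for two antitone functions then makes every
coordinate contribute a nonnegative amount.
-/

open MeasureTheory intervalIntegral Set

theorem ContDiff.sub_eq_integral_fderiv_segment {E G : Type*} [NormedAddCommGroup E]
    [NormedSpace ℝ E] [NormedAddCommGroup G] [NormedSpace ℝ G] [CompleteSpace G] {F : E → G}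
    (hF : ContDiff ℝ 1 F) (a b : E) :
    F b - F a = ∫ t in (0:ℝ)..1, fderiv ℝ F (a + t • (b - a)) (b - a) := by
  have hderiv (t : ℝ) : HasDerivAt (fun s : ℝ => F (a + s • (b - a)))
      (fderiv ℝ F (a + t • (b - a)) (b - a)) t := by
    have hline : HasDerivAt (fun s : ℝ => a + s • (b - a)) (b - a) t := by
      simpa using ((hasDerivAt_id t).smul_const (b - a)).const_add a
    exact ((hF.differentiable one_ne_zero) _).hasFDerivAt.comp_hasDerivAt t hline
  have hcont : Continuous fun t : ℝ => fderiv ℝ F (a + t • (b - a)) (b - a) := by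
    have := hF.continuous_fderiv one_ne_zero
    fun_prop
  rw [integral_eq_sub_of_hasDerivAt (fun t _ => hderiv t) (hcont.intervalIntegrable 0 1)]
  simp

theorem ContinuousLinearMap.apply_eq_sum_mul_single {ι : Type*} [Fintype ι] [DecidableEq ι]
    (L : (ι → ℝ) →L[ℝ] ℝ) (v : ι → ℝ) : L v = ∑ i, v i * L (Pi.single i 1) := by
  conv_lhs => rw [pi_eq_sum_univ' v]
  simp [map_sum, map_smul]

theorem Continuous.integrable_comp_of_ae_mem_compact {α X E : Type*} [MeasurableSpace α]
    {μ : Measure α} [IsFiniteMeasure μ] [TopologicalSpace X] [NormedAddCommGroup E]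
    {Ψ : X → E} {K : Set X} {φ : α → X} (hΨ : Continuous Ψ) (hK : IsCompact K)
    (hφ : AEStronglyMeasurable φ μ) (hφK : ∀ᵐ x ∂μ, φ x ∈ K) : Integrable (fun x => Ψ (φ x)) μ := by
  obtain ⟨C, hC⟩ := hK.exists_bound_of_continuousOn hΨ.continuousOn
  exact .of_bound (hΨ.comp_aestronglyMeasurable hφ) C (hφK.mono fun x hx => hC _ hx)

theorem integral_sub_comp_eq_integral_integral_fderiv {E : Type*} [NormedAddCommGroup E]
    [NormedSpace ℝ E] {f : E → ℝ} (hf : ContDiff ℝ 1 f) {K : Set E} (hK : IsCompact K)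
    {a b : ℝ} (hab : a ≤ b) {y : ℝ → E} (hy : AEStronglyMeasurable y (volume.restrict (Ioc a b)))
    (hyK : ∀ᵐ x ∂volume.restrict (Ioc a b), y x ∈ K) (p : E) :
    ∫ x in a..b, (f p - f (y x))
      = ∫ t in (0:ℝ)..1, ∫ x in a..b, fderiv ℝ f (y x + t • (p - y x)) (p - y x) := by
  have hΨ : Continuous fun q : E × ℝ => fderiv ℝ f (q.1 + q.2 • (p - q.1)) (p - q.1) := by
    have := hf.continuous_fderiv one_ne_zero
    fun_prop
  have hint : Integrable (Function.uncurry fun x t => fderiv ℝ f (y x + t • (p - y x)) (p - y x))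
      ((volume.restrict (Ioc a b)).prod (volume.restrict (Ioc (0:ℝ) 1))) := by
    refine hΨ.integrable_comp_of_ae_mem_compact (hK.prod (isCompact_Icc (a := (0:ℝ)) (b := 1)))
      (hy.comp_fst.prodMk measurable_snd.aestronglyMeasurable) ?_
    filter_upwards [Measure.quasiMeasurePreserving_fst.ae hyK,
      Measure.quasiMeasurePreserving_snd.ae (ae_restrict_mem measurableSet_Ioc)] with q hq₁ hq₂
    exact ⟨hq₁, Ioc_subset_Icc_self hq₂⟩
  simp only [integral_of_le hab, integral_of_le zero_le_one, hf.sub_eq_integral_fderiv_segment]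
  exact integral_integral_swap hint

theorem MonotoneOn.add_smul_sub {α E : Type*} [Preorder α] [AddCommGroup E] [PartialOrder E]
    [IsOrderedAddMonoid E] [Module ℝ E] [PosSMulMono ℝ E] {s : Set α} {y : α → E}
    (hy : MonotoneOn y s) (p : E) {t : ℝ} (ht : t ≤ 1) :
    MonotoneOn (fun x => y x + t • (p - y x)) s := by
  intro a ha b hb hab
  have hcomb (x : α) : y x + t • (p - y x) = (1 - t) • y x + t • p := by module
  simp only [hcomb]
  exact add_le_add_left (smul_le_smul_of_nonneg_left (hy ha hb hab) (sub_nonneg.2 ht)) _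

theorem MonotoneOn.aestronglyMeasurable_restrict_pi {ι : Type*} [Countable ι] {μ : Measure ℝ}
    {s : Set ℝ} (hs : MeasurableSet s) {y : ℝ → ι → ℝ} (hy : MonotoneOn y s) :
    AEStronglyMeasurable y (μ.restrict s) :=
  (aemeasurable_pi_lambda y fun k => aemeasurable_restrict_of_monotoneOn hs
    fun _ ha _ hb hab => hy ha hb hab k).aestronglyMeasurable

section Chebyshev
variable {a b : ℝ} {g h : ℝ → ℝ}

theorem exists_mul_sub_nonneg_of_antitoneOn (hab : a ≤ b) (hg : AntitoneOn g (Icc a b))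
    (hh : AntitoneOn h (Icc a b)) : ∃ c ∈ Icc a b, ∀ x ∈ Icc a b, 0 ≤ h x * (g x - g c) := by
  -- `c` separates the points where `h ≥ 0` (to its left) from those where `h < 0`.
  set S := insert a {x ∈ Icc a b | 0 ≤ h x}
  have hS_bdd : BddAbove S := ⟨b, by rintro x (rfl | hx); exacts [hab, hx.1.2]⟩
  have hc : sSup S ∈ Icc a b := ⟨le_csSup hS_bdd (mem_insert a _),
    csSup_le (insert_nonempty _ _) (by rintro x (rfl | hx); exacts [hab, hx.1.2])⟩
  refine ⟨sSup S, hc, fun x hx => ?_⟩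
  rcases le_or_gt 0 (h x) with hpos | hneg
  · exact mul_nonneg hpos <| sub_nonneg.2 <|
      hg hx hc (le_csSup hS_bdd (mem_insert_of_mem a ⟨hx, hpos⟩))
  · have hcx : sSup S ≤ x := by
      refine csSup_le (insert_nonempty _ _) ?_
      rintro z (rfl | ⟨hz, hhz⟩)
      · exact hx.1
      · by_contra! hxz
        exact (hhz.trans (hh hx hz hxz.le)).not_gt hneg
    exact mul_nonneg_of_nonpos_of_nonpos hneg.le (sub_nonpos.2 (hg hc hx hcx))

theorem intervalIntegrable_mul_of_antitoneOn (hab : a ≤ b) (hg : AntitoneOn g (Icc a b))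
    (hh : AntitoneOn h (Icc a b)) : IntervalIntegrable (fun x => h x * g x) volume a b := by
  have hg_int := (uIcc_of_le hab ▸ hg).intervalIntegrable (μ := volume)
  have hh_int := (uIcc_of_le hab ▸ hh).intervalIntegrable (μ := volume)
  rw [intervalIntegrable_iff_integrableOn_Ioc_of_le hab] at hg_int hh_int ⊢
  refine hh_int.mul_bdd hg_int.aestronglyMeasurable (c := max |g b| |g a|) ?_
  refine ae_restrict_of_forall_mem measurableSet_Ioc fun x hx => ?_
  have hx : x ∈ Icc a b := Ioc_subset_Icc_self hx
  exact abs_le_max_abs_abs (hg hx ⟨hab, le_rfl⟩ hx.2) (hg ⟨le_rfl, hab⟩ hx hx.1)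

theorem integral_mul_nonneg_of_antitoneOn (hab : a ≤ b) (hg : AntitoneOn g (Icc a b))
    (hh : AntitoneOn h (Icc a b)) (hh0 : ∫ x in a..b, h x = 0) : 0 ≤ ∫ x in a..b, h x * g x := by
  obtain ⟨c, -, hhgc⟩ := exists_mul_sub_nonneg_of_antitoneOn hab hg hh
  have hh_int : IntervalIntegrable h volume a b := (uIcc_of_le hab ▸ hh).intervalIntegrable
  calc 0 ≤ ∫ x in a..b, h x * (g x - g c) := integral_nonneg hab hhgc
    _ = ∫ x in a..b, h x * g x := by
      simp only [mul_sub, integral_sub (intervalIntegrable_mul_of_antitoneOn hab hg hh)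
        (hh_int.mul_const _), intervalIntegral.integral_mul_const, hh0, zero_mul, sub_zero]

end Chebyshev

section DRSubmodular
variable {ι : Type*} [Fintype ι] [DecidableEq ι] {f : (ι → ℝ) → ℝ} {s : Set (ι → ℝ)}

theorem fderiv_apply_single_anti_of_hessian_nonpos (hf : ContDiff ℝ 2 f) (hs : Convex ℝ s)
    (hHess : ∀ v ∈ s, ∀ i j,
      fderiv ℝ (fun w => fderiv ℝ f w (Pi.single i 1)) v (Pi.single j 1) ≤ 0)
    (k : ι) {a b : ι → ℝ} (ha : a ∈ s) (hb : b ∈ s) (hab : a ≤ b) :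
    fderiv ℝ f b (Pi.single k 1) ≤ fderiv ℝ f a (Pi.single k 1) := by
  have hpartial : ContDiff ℝ 1 fun w => fderiv ℝ f w (Pi.single k 1) :=
    (hf.fderiv_right le_rfl).clm_apply contDiff_const
  rw [← sub_nonpos, hpartial.sub_eq_integral_fderiv_segment, ← neg_nonneg,
    ← intervalIntegral.integral_neg]
  refine integral_nonneg zero_le_one fun t ht => neg_nonneg.2 ?_
  rw [ContinuousLinearMap.apply_eq_sum_mul_single]
  exact Finset.sum_nonpos fun j _ => mul_nonpos_of_nonneg_of_nonpos (sub_nonneg.2 (hab j))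
    (hHess _ (hs.add_smul_sub_mem ha hb ht) k j)

theorem integral_fderiv_apply_nonneg_of_monotoneOn (hf : ContDiff ℝ 2 f) (hs : Convex ℝ s)
    (hHess : ∀ v ∈ s, ∀ i j,
      fderiv ℝ (fun w => fderiv ℝ f w (Pi.single i 1)) v (Pi.single j 1) ≤ 0)
    {a b : ℝ} (hab : a ≤ b) {u v : ℝ → ι → ℝ} (hus : MapsTo u (Icc a b) s)
    (hu : MonotoneOn u (Icc a b)) (hv : AntitoneOn v (Icc a b))
    (hv0 : ∀ k, ∫ x in a..b, v x k = 0) :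
    0 ≤ ∫ x in a..b, fderiv ℝ f (u x) (v x) := by
  have hgrad (k : ι) : AntitoneOn (fun x => fderiv ℝ f (u x) (Pi.single k 1)) (Icc a b) :=
    fun x hx y hy hxy => fderiv_apply_single_anti_of_hessian_nonpos hf hs hHess k
      (hus hx) (hus hy) (hu hx hy hxy)
  have hvk (k : ι) : AntitoneOn (fun x => v x k) (Icc a b) :=
    fun x hx y hy hxy => hv hx hy hxy k
  have hexpand (x : ℝ) := (fderiv ℝ f (u x)).apply_eq_sum_mul_single (v x)
  simp only [hexpand]
  rw [integral_finsetSum fun k _ => intervalIntegrable_mul_of_antitoneOn hab (hgrad k) (hvk k)]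
  exact Finset.sum_nonneg fun k _ =>
    integral_mul_nonneg_of_antitoneOn hab (hgrad k) (hvk k) (hv0 k)

end DRSubmodular

theorem jensen_dr_submodular_ordered_general
    {d : ℕ} (f : (Fin d → ℝ) → ℝ)
    (hf : ContDiff ℝ 2 f)
    (hHess : ∀ v : Fin d → ℝ, (∀ k, v k ∈ Set.Icc (0:ℝ) 1) → ∀ i j : Fin d,
      fderiv ℝ (fun w => fderiv ℝ f w (Pi.single i 1)) v (Pi.single j 1) ≤ 0)
    (y : ℝ → Fin d → ℝ)
    (hybox : ∀ μ ∈ Set.Icc (0:ℝ) 1, ∀ k, y μ k ∈ Set.Icc (0:ℝ) 1)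
    (hymono : ∀ μ ∈ Set.Icc (0:ℝ) 1, ∀ μ' ∈ Set.Icc (0:ℝ) 1, μ < μ' → y μ ≤ y μ') :
    ∫ μ in (0:ℝ)..1, f (y μ) ≤ f (fun k => ∫ μ in (0:ℝ)..1, y μ k) := by
  set box : Set (Fin d → ℝ) := univ.pi fun _ => Icc 0 1
  set ybar : Fin d → ℝ := fun k => ∫ μ in (0:ℝ)..1, y μ k
  have hbox : Convex ℝ box := convex_pi fun _ _ => convex_Icc 0 1
  have hbox_cpt : IsCompact box := isCompact_univ_pi fun _ => isCompact_Icc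
  have hy : MonotoneOn y (Icc 0 1) := monotoneOn_iff_forall_lt.2 hymono
  have hyk_int (k : Fin d) : IntervalIntegrable (fun μ => y μ k) volume 0 1 :=
    MonotoneOn.intervalIntegrable <| (uIcc_of_le (zero_le_one (α := ℝ))).symm ▸
      fun μ hμ ν hν hμν => hy hμ hν hμν k
  have hy_meas : AEStronglyMeasurable y (volume.restrict (Ioc 0 1)) :=
    (hy.mono Ioc_subset_Icc_self).aestronglyMeasurable_restrict_pi measurableSet_Ioc
  have hy_box : ∀ᵐ μ ∂volume.restrict (Ioc (0:ℝ) 1), y μ ∈ box :=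
    ae_restrict_of_forall_mem measurableSet_Ioc fun μ hμ =>
      mem_univ_pi.2 (hybox μ (Ioc_subset_Icc_self hμ))
  have hybar : ybar ∈ box := mem_univ_pi.2 fun k =>
    ⟨integral_nonneg zero_le_one fun μ hμ => (hybox μ hμ k).1,
      (integral_mono_on zero_le_one (hyk_int k) intervalIntegrable_const
        fun μ hμ => (hybox μ hμ k).2).trans_eq (by simp)⟩
  have hfy : IntervalIntegrable (fun μ => f (y μ)) volume 0 1 :=
    (intervalIntegrable_iff_integrableOn_Ioc_of_le zero_le_one).2 <|
      hf.continuous.integrable_comp_of_ae_mem_compact hbox_cpt hy_meas hy_box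
  rw [← sub_nonneg]
  calc 0 ≤ ∫ t in (0:ℝ)..1, ∫ μ in (0:ℝ)..1, fderiv ℝ f (y μ + t • (ybar - y μ)) (ybar - y μ) :=
        integral_nonneg zero_le_one fun t ht =>
          integral_fderiv_apply_nonneg_of_monotoneOn hf hbox
            (fun v hv => hHess v (mem_univ_pi.1 hv)) zero_le_one
            (fun μ hμ => hbox.add_smul_sub_mem (mem_univ_pi.2 (hybox μ hμ)) hybar ht)
            (hy.add_smul_sub ybar ht.2) (fun μ hμ ν hν hμν => sub_le_sub_left (hy hμ hν hμν) ybar)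
            fun k => by simp [integral_sub intervalIntegrable_const (hyk_int k), ybar]
    _ = ∫ μ in (0:ℝ)..1, (f ybar - f (y μ)) :=
        (integral_sub_comp_eq_integral_integral_fderiv (hf.of_le one_le_two) hbox_cpt zero_le_one
          hy_meas hy_box ybar).symm
    _ = f ybar - ∫ μ in (0:ℝ)..1, f (y μ) := by simp [integral_sub intervalIntegrable_const hfy]

theorem jensen_dr_submodular_ordered
    {d : ℕ} (f : (Fin d → ℝ) → ℝ)
    (hf : ContDiff ℝ 2 f)
    (hHess : ∀ v : Fin d → ℝ, (∀ k, v k ∈ Set.Icc (0:ℝ) 1) → ∀ i j : Fin d,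
      fderiv ℝ (fun w => fderiv ℝ f w (Pi.single i 1)) v (Pi.single j 1) ≤ 0)
    (y : ℝ → Fin d → ℝ)
    (hybox : ∀ μ ∈ Set.Icc (0:ℝ) 1, ∀ k, y μ k ∈ Set.Icc (0:ℝ) 1)
    (hymono : ∀ μ ∈ Set.Icc (0:ℝ) 1, ∀ μ' ∈ Set.Icc (0:ℝ) 1, μ < μ' → y μ ≤ y μ')
    (hyint : ∀ k, IntervalIntegrable (fun μ => y μ k) volume 0 1) :
    ∫ μ in (0:ℝ)..1, f (y μ) ≤ f (fun k => ∫ μ in (0:ℝ)..1, y μ k) :=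
  jensen_dr_submodular_ordered_general f hf hHess y hybox hymono
end

section
/- Let A ≥ B ≥ 1 be reals and define f(y,z) = (A·y + B·(z−y)) / ((A−1)·y + (B−1)·(z−y) + 1) on the domain {(y,z) ∈ [0,1]² : y ≤ z}. Then all three second partial derivatives ∂²f/∂y², ∂²f/∂y∂z, ∂²f/∂z² are nonpositive on this domain. -/
/-!
Along every coordinate line `f` is a Möbius function `t ↦ (a t + b) / (c t + d)`, whose second
derivative is `-2 c (a d - b c) / (c t + d)³`, and `∂f/∂y = (A - B)(1 - z) / D²` with
`D = (A - B) y + (B - 1) z + 1 > 0`. The three second partials are therefore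
`-2 (A - B)² (1 - z) / D³`, `-(A - B) (D + 2 (B - 1)(1 - z)) / D³` and
`-2 (B - 1) ((A - B) y + B) / D³`, each nonpositive when `A ≥ B ≥ 1` and `0 ≤ y ≤ z ≤ 1`.
-/

open Filter Topology

section AffineQuotient

variable {a b c d x : ℝ}

theorem hasDerivAt_affine_div_affine_pow (n : ℕ) (hx : c * x + d ≠ 0) :
    HasDerivAt (fun t => (a * t + b) / (c * t + d) ^ (n + 1))
      ((a * (c * x + d) - (n + 1) * c * (a * x + b)) / (c * x + d) ^ (n + 2)) x := by
  have hnum : HasDerivAt (fun t => a * t + b) a x := by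
    simpa using ((hasDerivAt_id x).const_mul a).add_const b
  have hden : HasDerivAt (fun t => c * t + d) c x := by
    simpa using ((hasDerivAt_id x).const_mul c).add_const d
  refine (hnum.fun_div (hden.fun_pow (n + 1)) (pow_ne_zero _ hx)).congr_deriv ?_
  rw [div_eq_div_iff (pow_ne_zero _ (pow_ne_zero _ hx)) (pow_ne_zero _ hx)]
  push_cast
  ring

theorem hasDerivAt_affine_div_affine (hx : c * x + d ≠ 0) :
    HasDerivAt (fun t => (a * t + b) / (c * t + d)) ((a * d - b * c) / (c * x + d) ^ 2) x := by
  convert hasDerivAt_affine_div_affine_pow (a := a) (b := b) 0 hx using 1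
  · simp
  · push_cast; ring

theorem deriv_deriv_affine_div_affine (hx : c * x + d ≠ 0) :
    deriv (deriv fun t => (a * t + b) / (c * t + d)) x =
      -2 * c * (a * d - b * c) / (c * x + d) ^ 3 := by
  have hnear : ∀ᶠ t in 𝓝 x, c * t + d ≠ 0 :=
    (by fun_prop : Continuous fun t => c * t + d).continuousAt.eventually_ne hx
  have hderiv : (deriv fun t => (a * t + b) / (c * t + d)) =ᶠ[𝓝 x]
      fun t => (0 * t + (a * d - b * c)) / (c * t + d) ^ (1 + 1) := by
    filter_upwards [hnear] with t ht
    simp [(hasDerivAt_affine_div_affine ht).deriv]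
  rw [hderiv.deriv_eq, (hasDerivAt_affine_div_affine_pow 1 hx).deriv]
  push_cast
  ring

theorem deriv_deriv_affine_div_affine_mixed {s t k : ℝ} (h : c * s + (d * t + k) ≠ 0) :
    deriv (fun t' => deriv (fun s' => (a * s' + b * t') / (c * s' + (d * t' + k))) s) t =
      ((a * d - b * c) * (c * s + (d * t + k)) - 2 * d * ((a * d - b * c) * t + a * k)) /
        (c * s + (d * t + k)) ^ 3 := by
  have hnear : ∀ᶠ t' in 𝓝 t, c * s + (d * t' + k) ≠ 0 :=
    (by fun_prop : Continuous fun t' => c * s + (d * t' + k)).continuousAt.eventually_ne h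
  have hinner : (fun t' => deriv (fun s' => (a * s' + b * t') / (c * s' + (d * t' + k))) s) =ᶠ[𝓝 t]
      fun t' => ((a * d - b * c) * t' + a * k) / (d * t' + (c * s + k)) ^ (1 + 1) := by
    filter_upwards [hnear] with t' ht'
    rw [(hasDerivAt_affine_div_affine ht').deriv]
    congr 1 <;> ring
  rw [hinner.deriv_eq, (hasDerivAt_affine_div_affine_pow 1 (by convert h using 1; ring)).deriv]
  push_cast
  congr 1 <;> ring

end AffineQuotient

theorem f_dr_submodular_case_AB_ge_one
    (A B : ℝ) (hAB : B ≤ A) (hB : 1 ≤ B)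
    (f : ℝ → ℝ → ℝ)
    (hf : ∀ y z, f y z =
      (A * y + B * (z - y)) / ((A - 1) * y + (B - 1) * (z - y) + 1)) :
    ∀ y z : ℝ, 0 ≤ y → y ≤ z → z ≤ 1 →
      deriv (fun y' => deriv (fun y'' => f y'' z) y') y ≤ 0 ∧
      deriv (fun z' => deriv (fun y' => f y' z') y) z ≤ 0 ∧
      deriv (fun z' => deriv (fun z'' => f y z'') z') z ≤ 0 := by
  intro y z hy hyz hz
  have hf_y (z : ℝ) : (fun y' => f y' z) =
      fun t => ((A - B) * t + B * z) / ((A - B) * t + ((B - 1) * z + 1)) :=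
    funext fun t => by rw [hf]; ring
  have hf_z : (fun z' => f y z') =
      fun t => (B * t + (A - B) * y) / ((B - 1) * t + ((A - B) * y + 1)) :=
    funext fun t => by rw [hf]; ring
  have hAB' : 0 ≤ A - B := sub_nonneg.2 hAB
  have hB' : 0 ≤ B - 1 := sub_nonneg.2 hB
  have hD : 0 < (A - B) * y + ((B - 1) * z + 1) := by
    nlinarith [mul_nonneg hB' (hy.trans hyz), mul_nonneg hAB' hy]
  have hD' : 0 < (B - 1) * z + ((A - B) * y + 1) := by linarith
  refine ⟨?_, ?_, ?_⟩
  · rw [hf_y, deriv_deriv_affine_div_affine hD.ne']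
    apply div_nonpos_of_nonpos_of_nonneg _ (pow_pos hD 3).le
    nlinarith [mul_nonneg (mul_nonneg hAB' hAB') (sub_nonneg.2 hz)]
  · simp only [hf_y]
    rw [deriv_deriv_affine_div_affine_mixed hD.ne']
    apply div_nonpos_of_nonpos_of_nonneg _ (pow_pos hD 3).le
    nlinarith [mul_nonneg hAB' hD.le, mul_nonneg (mul_nonneg hAB' hB') (sub_nonneg.2 hz)]
  · rw [hf_z, deriv_deriv_affine_div_affine hD'.ne']
    apply div_nonpos_of_nonpos_of_nonneg _ (pow_pos hD' 3).le
    nlinarith [mul_nonneg (mul_nonneg hAB' hy) hB']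
end

section
/- Let Ā : [0,1] → ℝ be twice continuously differentiable with Ā(0) = V > 0, Ā'(0) ≤ −V, and (2 + 2 ln 2)·Ā(t) + (3 + ln 2)·Ā'(t) + Ā''(t) ≤ 0 for all t ∈ [0,1]. Then Ā(1) ≤ (V/(1 − ln 2))·(1/(2e) − (ln 2)/e²). -/
/-!
Writing `L = log 2`, the operator `D² + (3 + L) D + (2 + 2L)` factors as `(D + 2)(D + (1 + L))`.
Each first-order factor `D + c` obeys a comparison principle (multiply by the integrating factor
`exp (c t)`), so the hypothesis yields first `A' + (1 + L) A ≤ V L e^{-2t}` and then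
`A ≤ B`, where `B t = V / (1 - L) · ((2e)^{-t} - L e^{-2t})` solves both problems with equality.
-/

open Real Set

theorem le_of_hasDerivAt_add_mul_le {u v u' v' : ℝ → ℝ} {a b c : ℝ}
    (hu : ∀ t ∈ Icc a b, HasDerivAt u (u' t) t) (hv : ∀ t ∈ Icc a b, HasDerivAt v (v' t) t)
    (hle : ∀ t ∈ Icc a b, u' t + c * u t ≤ v' t + c * v t) (ha : u a ≤ v a) :
    ∀ t ∈ Icc a b, u t ≤ v t := by
  set φ : ℝ → ℝ := fun t => exp (c * t) * (u t - v t)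
  have hφ : ∀ t ∈ Icc a b,
      HasDerivAt φ (exp (c * t) * (u' t + c * u t - (v' t + c * v t))) t := fun t ht => by
    have hexp : HasDerivAt (fun t => exp (c * t)) (exp (c * t) * (c * 1)) t :=
      ((hasDerivAt_id t).const_mul c).exp
    exact (hexp.mul ((hu t ht).sub (hv t ht))).congr_deriv
      (by rw [Pi.sub_apply]; ring)
  have hanti : AntitoneOn φ (Icc a b) := by
    refine antitoneOn_of_hasDerivWithinAt_nonpos (convex_Icc a b)
      (fun t ht => (hφ t ht).continuousAt.continuousWithinAt)
      (fun t ht => (hφ t (interior_subset ht)).hasDerivWithinAt) fun t ht => ?_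
    exact mul_nonpos_of_nonneg_of_nonpos (exp_pos _).le
      (sub_nonpos.mpr (hle t (interior_subset ht)))
  intro t ht
  have hφt : φ t ≤ φ a := hanti (left_mem_Icc.mpr (ht.1.trans ht.2)) ht ht.1
  have hφa : φ a ≤ 0 := mul_nonpos_of_nonneg_of_nonpos (exp_pos _).le (sub_nonpos.mpr ha)
  exact sub_nonpos.mp (nonpos_of_mul_nonpos_right (hφt.trans hφa) (exp_pos _))

lemma one_sub_log_two_pos : 0 < 1 - log 2 := by
  linarith [log_lt_sub_one_of_pos (by norm_num : (0 : ℝ) < 2) (by norm_num)]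

/-- The function `B` of the paper, with `(2e)^{-t}` written as `exp (-(1 + log 2) * t)`. -/
noncomputable def comparisonFn (V t : ℝ) : ℝ :=
  V / (1 - log 2) * (exp (-(1 + log 2) * t) - log 2 * exp (-2 * t))

lemma hasDerivAt_comparisonFn (V t : ℝ) :
    HasDerivAt (comparisonFn V)
      (V * log 2 * exp (-2 * t) - (1 + log 2) * comparisonFn V t) t := by
  have h1 : HasDerivAt (fun t => exp (-(1 + log 2) * t))
      (exp (-(1 + log 2) * t) * (-(1 + log 2) * 1)) t :=
    ((hasDerivAt_id t).const_mul _).exp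
  have h2 : HasDerivAt (fun t => exp (-2 * t)) (exp (-2 * t) * (-2 * 1)) t :=
    ((hasDerivAt_id t).const_mul _).exp
  have : 1 - log 2 ≠ 0 := one_sub_log_two_pos.ne'
  refine ((h1.sub (h2.const_mul (log 2))).const_mul (V / (1 - log 2))).congr_deriv ?_
  rw [comparisonFn]
  field_simp
  ring

lemma comparisonFn_zero (V : ℝ) : comparisonFn V 0 = V := by
  have : 1 - log 2 ≠ 0 := one_sub_log_two_pos.ne'
  simp only [comparisonFn, mul_zero, exp_zero]
  field_simp

lemma comparisonFn_one (V : ℝ) :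
    comparisonFn V 1 = V / (1 - log 2) * (1 / (2 * exp 1) - log 2 / exp 1 ^ 2) := by
  have h1 : exp (-(1 + log 2) * 1) = 1 / (2 * exp 1) := by
    rw [mul_one, exp_neg, exp_add, exp_log two_pos, one_div, mul_comm]
  have h2 : exp (-2 * 1) = 1 / exp 1 ^ 2 := by
    rw [mul_one, exp_neg, ← exp_nat_mul 1 2]; norm_num
  rw [comparisonFn, h1, h2, mul_one_div]

theorem diff_ineq_final_bound_general
    (A : ℝ → ℝ) (hA : ContDiff ℝ 2 A)
    (V : ℝ)
    (h0 : A 0 = V) (h0' : deriv A 0 ≤ -V)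
    (hineq : ∀ t ∈ Set.Icc (0:ℝ) 1,
      (2 + 2 * Real.log 2) * A t + (3 + Real.log 2) * deriv A t
        + deriv (deriv A) t ≤ 0) :
    A 1 ≤ (V / (1 - Real.log 2)) *
      (1 / (2 * Real.exp 1) - Real.log 2 / (Real.exp 1) ^ 2) := by
  have hA' : ∀ t, HasDerivAt A (deriv A t) t := fun t =>
    ((hA.differentiable two_ne_zero) t).hasDerivAt
  have hA'' : ∀ t, HasDerivAt (deriv A) (deriv (deriv A) t) t := fun t =>
    ((hA.iterate_deriv' 1 1).differentiable one_ne_zero t).hasDerivAt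
  have hfirst : ∀ t ∈ Icc (0 : ℝ) 1,
      deriv A t + (1 + log 2) * A t ≤ V * log 2 * exp (-2 * t) := by
    refine le_of_hasDerivAt_add_mul_le (c := 2)
      (fun t _ => (hA'' t).add ((hA' t).const_mul (1 + log 2)))
      (fun t _ => (((hasDerivAt_id t).const_mul (-2)).exp).const_mul (V * log 2))
      (fun t ht => ?_) ?_
    · rw [id]
      linarith [hineq t ht]
    · simp only [mul_zero, exp_zero, mul_one, h0]
      linarith
  have hsecond : ∀ t ∈ Icc (0 : ℝ) 1, A t ≤ comparisonFn V t :=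
    le_of_hasDerivAt_add_mul_le (c := 1 + log 2) (fun t _ => hA' t)
      (fun t _ => hasDerivAt_comparisonFn V t) (fun t ht => by linarith [hfirst t ht])
      (by rw [h0, comparisonFn_zero])
  exact (comparisonFn_one V) ▸ hsecond 1 (right_mem_Icc.mpr zero_le_one)

theorem diff_ineq_final_bound
    (A : ℝ → ℝ) (hA : ContDiff ℝ 2 A)
    (V : ℝ) (hV : 0 < V)
    (h0 : A 0 = V) (h0' : deriv A 0 ≤ -V)
    (hineq : ∀ t ∈ Set.Icc (0:ℝ) 1,
      (2 + 2 * Real.log 2) * A t + (3 + Real.log 2) * deriv A t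
        + deriv (deriv A) t ≤ 0) :
    A 1 ≤ (V / (1 - Real.log 2)) *
      (1 / (2 * Real.exp 1) - Real.log 2 / (Real.exp 1) ^ 2) :=
  diff_ineq_final_bound_general A hA V h0 h0' hineq
end

section
/- Let I and J be finite sets with a bipartite edge set, and suppose nonnegative reals (x_{ij}), (y_{ij}), (Δ_j)_{j∈J} satisfy: (a) Σ_j y_{ij} = λ_i·p(x_i/λ_i) for every i, where x_i = Σ_j x_{ij} ≤ λ_i and p(ρ) = min{2ρ,1}; (b) λ_i·p(x_i/λ_i) − λ_i·p((x_i − x_{ij})/λ_i) ≤ y_{ij} ≤ min{2x_{ij}, λ_i} for every edge (i,j); (c) Δ_j ≤ 1 − ln 2 for every j; and set y_j = Σ_i y_{ij}, Δ_{ij} = max(2x_{ij} − λ_i, 0). Then Σ_j (2 − Δ_j)·Σ_i (λ_i p(x_i/λ_i) − λ_i p((x_i − x_{ij})/λ_i) − Δ_{ij}) + Σ_j y_j (Δ_j − 1 + ln 2) ≤ (2 + 2 ln 2)·Σ_{(i,j)} (y_{ij} − x_{ij}). -/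
open Finset

private lemma sub_min_eq_max (a b : ℝ) : b - min a b = max (b - a) 0 := by
  rcases le_total a b with h | h
  · rw [min_eq_left h, max_eq_left (by linarith)]
  · rw [min_eq_right h, max_eq_right (by linarith)]; ring

private lemma key_ineq {J : Type*} [Fintype J] (lam : ℝ) (hlam : 0 < lam)
    (t : J → ℝ) (ht : ∀ j, 0 ≤ t j) (hs : ∑ j, t j ≤ lam) :
    ∑ j : J, (min (2 * ∑ j' : J, t j') lam - min (2 * ((∑ j' : J, t j') - t j)) lam
      - max (2 * t j - lam) 0)
    ≤ 2 * (min (2 * ∑ j' : J, t j') lam - ∑ j' : J, t j') := by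
  classical
  have htle : ∀ j, t j ≤ ∑ j' : J, t j' :=
    fun j => Finset.single_le_sum (fun j _ => ht j) (Finset.mem_univ j)
  have hs0 : (0:ℝ) ≤ ∑ j' : J, t j' := Finset.sum_nonneg fun j _ => ht j
  set s := ∑ j' : J, t j' with hsdef
  rcases le_or_gt (2 * s) lam with h | h
  · have heq : ∀ j ∈ (Finset.univ : Finset J),
        min (2 * s) lam - min (2 * (s - t j)) lam - max (2 * t j - lam) 0 = 2 * t j := by
      intro j _
      rw [min_eq_left h, min_eq_left (by linarith [ht j]), max_eq_right (by linarith [htle j])]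
      ring
    rw [Finset.sum_congr rfl heq, ← Finset.mul_sum, ← hsdef, min_eq_left h]
    linarith
  · rw [min_eq_right h.le]
    set f : J → ℝ := fun j => max (2 * t j - (2 * s - lam)) 0 - max (2 * t j - lam) 0 with hf
    have heq : ∀ j ∈ (Finset.univ : Finset J),
        lam - min (2 * (s - t j)) lam - max (2 * t j - lam) 0 = f j := by
      intro j _
      have h1 := sub_min_eq_max (2 * (s - t j)) lam
      have h2 : lam - 2 * (s - t j) = 2 * t j - (2 * s - lam) := by ring
      rw [h2] at h1
      simp only [hf]
      linarith
    rw [Finset.sum_congr rfl heq]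
    set S := Finset.univ.filter (fun j => 0 < 2 * t j - (2 * s - lam)) with hS
    have hsplit : ∑ j, f j ≤ ∑ j ∈ S, f j := by
      have hsum := Finset.sum_filter_add_sum_filter_not Finset.univ
        (fun j => 0 < 2 * t j - (2 * s - lam)) f
      have hneg : ∑ j ∈ Finset.univ.filter (fun j => ¬ 0 < 2 * t j - (2 * s - lam)), f j ≤ 0 := by
        apply Finset.sum_nonpos
        intro j hj
        have hj' := (Finset.mem_filter.mp hj).2
        push_neg at hj'
        simp only [hf]
        have h1 : max (2 * t j - (2 * s - lam)) 0 = 0 := max_eq_right hj'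
        have h2 := le_max_right (2 * t j - lam) 0
        linarith
      rw [← hS] at hsum
      linarith
    have hsS : ∑ j ∈ S, t j ≤ s := by
      rw [hsdef]
      exact Finset.sum_le_sum_of_subset_of_nonneg (Finset.subset_univ S) (fun j _ _ => ht j)
    rcases le_or_gt S.card 1 with hcard | hcard
    · have each : ∀ j ∈ S, f j ≤ 2 * (lam - s) := by
        intro j _
        simp only [hf]
        have h1 := le_max_left (2 * t j - lam) 0
        have h2 := le_max_right (2 * t j - lam) 0
        have h3 : max (2 * t j - (2 * s - lam)) 0 ≤ max (2 * t j - lam) 0 + 2 * (lam - s) := by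
          apply max_le <;> linarith
        linarith
      have hb := Finset.sum_le_card_nsmul S f _ each
      have hcast : (S.card : ℝ) ≤ 1 := by exact_mod_cast hcard
      have hc0 : (0:ℝ) ≤ 2 * (lam - s) := by linarith
      have : (S.card : ℝ) * (2 * (lam - s)) ≤ 1 * (2 * (lam - s)) :=
        mul_le_mul_of_nonneg_right hcast hc0
      rw [nsmul_eq_mul] at hb
      linarith
    · have hm : (0:ℝ) < 2 * s - lam := by linarith
      have step1 : ∑ j ∈ S, f j ≤ ∑ j ∈ S, (2 * t j - (2 * s - lam)) := by
        apply Finset.sum_le_sum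
        intro j hj
        have hj' := (Finset.mem_filter.mp hj).2
        simp only [hf]
        rw [max_eq_left hj'.le]
        linarith [le_max_right (2 * t j - lam) 0]
      have step2 : ∑ j ∈ S, (2 * t j - (2 * s - lam))
          = 2 * (∑ j ∈ S, t j) - (S.card : ℝ) * (2 * s - lam) := by
        rw [Finset.sum_sub_distrib, Finset.sum_const, ← Finset.mul_sum, nsmul_eq_mul]
      have hcast : (2:ℝ) ≤ (S.card : ℝ) := by exact_mod_cast hcard
      have : (2:ℝ) * (2 * s - lam) ≤ (S.card : ℝ) * (2 * s - lam) :=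
        mul_le_mul_of_nonneg_right hcast hm.le
      linarith

theorem top_half_sampling_main_lemma
    {I J : Type*} [Fintype I] [Fintype J]
    (lam : I → ℝ) (hlam : ∀ i, 0 < lam i)
    (x y : I → J → ℝ) (Δ : J → ℝ)
    (hx : ∀ i j, 0 ≤ x i j) (hy : ∀ i j, 0 ≤ y i j) (hΔ : ∀ j, 0 ≤ Δ j)
    (p : ℝ → ℝ) (hp : ∀ ρ, p ρ = min (2 * ρ) 1)
    (hxi : ∀ i, ∑ j, x i j ≤ lam i)
    (ha : ∀ i, ∑ j, y i j = lam i * p ((∑ j, x i j) / lam i))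
    (hb_lo : ∀ i j,
      lam i * p ((∑ j', x i j') / lam i)
        - lam i * p (((∑ j', x i j') - x i j) / lam i) ≤ y i j)
    (hb_hi : ∀ i j, y i j ≤ min (2 * x i j) (lam i))
    (hc : ∀ j, Δ j ≤ 1 - Real.log 2) :
    ∑ j, (2 - Δ j) *
        (∑ i, (lam i * p ((∑ j', x i j') / lam i)
          - lam i * p (((∑ j', x i j') - x i j) / lam i)
          - max (2 * x i j - lam i) 0))
      + ∑ j, (∑ i, y i j) * (Δ j - 1 + Real.log 2)
    ≤ (2 + 2 * Real.log 2) * ∑ i, ∑ j, (y i j - x i j) := by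
  have hl2 : (0:ℝ) < Real.log 2 := Real.log_pos one_lt_two
  have hmin : ∀ (i : I) (s : ℝ), lam i * p (s / lam i) = min (2 * s) (lam i) := by
    intro i s
    have e : 2 * (s / lam i) = (2 * s) / lam i := by ring
    rw [hp, e]
    rcases le_total (2 * s) (lam i) with h | h
    · rw [min_eq_left ((div_le_one (hlam i)).mpr h), min_eq_left h,
        ← mul_div_assoc, mul_div_cancel_left₀ _ (hlam i).ne']
    · rw [min_eq_right ((one_le_div (hlam i)).mpr h), min_eq_right h]
      ring
  simp only [hmin]
  set A : I → J → ℝ := fun i j => min (2 * ∑ j', x i j') (lam i)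
      - min (2 * ((∑ j', x i j') - x i j)) (lam i) - max (2 * x i j - lam i) 0 with hA
  have hAy : ∀ i j, A i j ≤ y i j := by
    intro i j
    have h := hb_lo i j
    simp only [hmin] at h
    simp only [hA]
    linarith [le_max_right (2 * x i j - lam i) 0]
  have key : ∀ i, ∑ j, A i j ≤ 2 * (∑ j, y i j - ∑ j, x i j) := by
    intro i
    have h := key_ineq (lam i) (hlam i) (x i) (hx i) (hxi i)
    have ha' : ∑ j, y i j = min (2 * ∑ j', x i j') (lam i) := by
      rw [ha i, hmin]
    simp only [hA]
    linarith
  calc ∑ j, (2 - Δ j) * (∑ i, A i j) + ∑ j, (∑ i, y i j) * (Δ j - 1 + Real.log 2)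
      = ∑ j, ∑ i, ((2 - Δ j) * A i j + y i j * (Δ j - 1 + Real.log 2)) := by
        simp only [Finset.mul_sum, Finset.sum_mul, ← Finset.sum_add_distrib]
    _ ≤ ∑ j, ∑ i, (1 + Real.log 2) * A i j := by
        apply Finset.sum_le_sum
        intro j _
        apply Finset.sum_le_sum
        intro i _
        nlinarith [mul_nonpos_of_nonpos_of_nonneg
          (show Δ j - 1 + Real.log 2 ≤ 0 by linarith [hc j])
          (show 0 ≤ y i j - A i j by linarith [hAy i j])]
    _ = (1 + Real.log 2) * ∑ i, ∑ j, A i j := by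
        rw [Finset.sum_comm, Finset.mul_sum]
        simp [Finset.mul_sum]
    _ ≤ (1 + Real.log 2) * ∑ i, 2 * (∑ j, y i j - ∑ j, x i j) := by
        apply mul_le_mul_of_nonneg_left (Finset.sum_le_sum fun i _ => key i)
        linarith
    _ = (2 + 2 * Real.log 2) * ∑ i, ∑ j, (y i j - x i j) := by
        simp only [Finset.sum_sub_distrib, ← Finset.mul_sum]
        ring
end

section
/- For all z ∈ (0, 0.8], (1 − (1−z)e^{−z})·(e^z/z − e^z/(e^z − 1)) ≤ e^z − 1. -/
theorem exp_ratio_ineq (z : ℝ) (h0 : 0 < z) (h1 : z ≤ 0.8) :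
    (1 - (1 - z) * Real.exp (-z)) *
      (Real.exp z / z - Real.exp z / (Real.exp z - 1)) ≤ Real.exp z - 1 := by
  have hz1 : z ≤ 1 := by linarith
  have hub := Real.exp_bound' h0.le hz1 (n := 4) (by norm_num)
  have hub' : Real.exp z ≤ 1 + z + z^2/2 + z^3/6 + 5*z^4/96 := by
    norm_num [Finset.sum_range_succ, Nat.factorial] at hub
    linarith
  have hlb : 1 + z < Real.exp z := by
    have := Real.add_one_lt_exp (ne_of_gt h0); linarith
  set E := Real.exp z with hE
  have hE0 : (0:ℝ) < E := Real.exp_pos z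
  have hE1 : 0 < E - 1 := by linarith
  have hq : (z + z^2/2 + z^3/6 + 5*z^4/96)^2 * (1 - z) ≤ z^2 := by
    nlinarith [pow_nonneg h0.le 4, pow_nonneg h0.le 5, pow_nonneg h0.le 6,
      pow_nonneg h0.le 7, pow_nonneg h0.le 8, pow_nonneg h0.le 9]
  have h2 : (E - 1)^2 ≤ (z + z^2/2 + z^3/6 + 5*z^4/96)^2 :=
    pow_le_pow_left₀ hE1.le (by linarith) 2
  have key : (E - 1)^2 * (1 - z) ≤ z^2 :=
    le_trans (mul_le_mul_of_nonneg_right h2 (by linarith)) hq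
  have hzne : z ≠ 0 := ne_of_gt h0
  have hEne : E ≠ 0 := ne_of_gt hE0
  have hE1ne : E - 1 ≠ 0 := ne_of_gt hE1
  have hiden : (1 - (1 - z) * Real.exp (-z)) * (E / z - E / (E - 1))
      = ((E - 1)^2 - z^2) / (z * (E - 1)) := by
    rw [Real.exp_neg, ← hE]
    field_simp
    ring
  rw [hiden, div_le_iff₀ (by positivity)]
  nlinarith [key, mul_pos h0 hE1]
end

section
/- Let x > 0 and let p : [0,1] → (0,∞) be continuously differentiable with p(0) = 1 and, for all t ∈ [0,1), p'(t) = p(t)·log(1 − x + x·e^{−2tx}/p(t)) / (1 − e^{−2tx}/p(t)) (interpreted as −p(t)·x when p(t) = e^{−2tx}). Then p(t) ≥ e^{−2tx} for all t ∈ [0,1]. -/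
open Topology Filter


theorem first_level_loose_bound
    (x : ℝ) (hx0 : 0 < x) (hx1 : x ≤ 1)
    (p : ℝ → ℝ) (hpos : ∀ t ∈ Set.Icc (0:ℝ) 1, 0 < p t)
    (hcont : ContinuousOn p (Set.Icc (0:ℝ) 1))
    (h0 : p 0 = 1)
    (hode : ∀ t ∈ Set.Ico (0:ℝ) 1,
      HasDerivAt p
        (if p t = Real.exp (-2 * t * x) then -p t * x
         else p t * Real.log (1 - x + x * Real.exp (-2 * t * x) / p t)
                / (1 - Real.exp (-2 * t * x) / p t)) t) :
    ∀ t ∈ Set.Icc (0:ℝ) 1, Real.exp (-2 * t * x) ≤ p t := by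
  by_contra hcon
  push_neg at hcon
  obtain ⟨t0, ht0, hlt⟩ := hcon
  have hsub : Set.Icc (0:ℝ) t0 ⊆ Set.Icc 0 1 := Set.Icc_subset_Icc_right ht0.2
  have hfc : ContinuousOn (fun t => p t - Real.exp (-2 * t * x)) (Set.Icc 0 t0) :=
    (hcont.mono hsub).sub (Continuous.continuousOn (by continuity))
  set f : ℝ → ℝ := fun t => p t - Real.exp (-2 * t * x) with hfdef
  set S : Set ℝ := Set.Icc 0 t0 ∩ f ⁻¹' Set.Ici 0 with hSdef
  have hSclosed : IsClosed S :=
    hfc.preimage_isClosed_of_isClosed isClosed_Icc isClosed_Ici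
  have h0S : (0:ℝ) ∈ S := by
    refine ⟨⟨le_refl 0, ht0.1⟩, ?_⟩
    simp [f, h0]
  have hSne : S.Nonempty := ⟨0, h0S⟩
  have hSbdd : BddAbove S := ⟨t0, fun t ht => ht.1.2⟩
  set s := sSup S with hsdef
  have hsS : s ∈ S := hSclosed.csSup_mem hSne hSbdd
  have hs0 : 0 ≤ s := hsS.1.1
  have hst0 : s ≤ t0 := hsS.1.2
  have hsle : Real.exp (-2 * s * x) ≤ p s := by
    have := hsS.2
    simpa [f, sub_nonneg] using this
  have hsne : s ≠ t0 := by
    intro h; rw [h] at hsle; linarith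
  have hslt : s < t0 := lt_of_le_of_ne hst0 hsne
  have hnot : ∀ t, s < t → t ≤ t0 → p t < Real.exp (-2 * t * x) := by
    intro t hst htt0
    by_contra hge
    push_neg at hge
    have htS : t ∈ S := ⟨⟨le_trans hs0 hst.le, htt0⟩, by
      simpa [f, sub_nonneg] using hge⟩
    exact absurd (le_csSup hSbdd htS) (not_le.mpr hst)
  have hIoc_mem : Set.Ioc s t0 ∈ 𝓝[>] s := Ioc_mem_nhdsGT_of_mem ⟨le_rfl, hslt⟩
  have hpeq : p s = Real.exp (-2 * s * x) := by
    by_contra hne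
    have hgt : Real.exp (-2 * s * x) < p s := lt_of_le_of_ne hsle (Ne.symm hne)
    have hcw : ContinuousWithinAt f (Set.Icc 0 t0) s := hfc s ⟨hs0, hst0⟩
    have hcw2 : ContinuousWithinAt f (Set.Ioc s t0) s :=
      hcw.mono (fun t ht => ⟨le_trans hs0 ht.1.le, ht.2⟩)
    have hT : Filter.Tendsto f (𝓝[>] s) (𝓝 (f s)) := by
      rw [← nhdsWithin_Ioc_eq_nhdsGT hslt]
      exact hcw2
    have hfs : 0 < f s := sub_pos.mpr hgt
    have hev : ∀ᶠ t in 𝓝[>] s, 0 < f t := hT.eventually (eventually_gt_nhds hfs)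
    obtain ⟨t, htpos, htIoc⟩ := (hev.and (Filter.eventually_mem_set.mpr hIoc_mem)).exists
    exact absurd htpos (not_lt.mpr (sub_nonpos.mpr (hnot t htIoc.1 htIoc.2).le))
  have hsIco : s ∈ Set.Ico (0:ℝ) 1 := ⟨hs0, lt_of_lt_of_le hslt ht0.2⟩
  have hderiv := hode s hsIco
  rw [if_pos hpeq] at hderiv
  have hlin : HasDerivAt (fun t : ℝ => -2 * t * x) (-2 * x) s := by
    simpa using ((hasDerivAt_id s).const_mul (-2)).mul_const x
  have hEd : HasDerivAt (fun t : ℝ => Real.exp (-2 * t * x))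
      (Real.exp (-2 * s * x) * (-2 * x)) s := hlin.exp
  have hfd : HasDerivAt f (-p s * x - Real.exp (-2 * s * x) * (-2 * x)) s :=
    hderiv.sub hEd
  have hdpos : 0 < -p s * x - Real.exp (-2 * s * x) * (-2 * x) := by
    rw [hpeq]
    have := Real.exp_pos (-2 * s * x)
    nlinarith
  have hslope := hasDerivAt_iff_tendsto_slope.mp hfd
  have hslope' : Filter.Tendsto (slope f s) (𝓝[>] s)
      (𝓝 (-p s * x - Real.exp (-2 * s * x) * (-2 * x))) :=
    hslope.mono_left (nhdsWithin_mono s (fun t ht => Set.mem_compl_singleton_iff.mpr (ne_of_gt ht)))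
  have hev2 : ∀ᶠ t in 𝓝[>] s, 0 < slope f s t :=
    hslope'.eventually (eventually_gt_nhds hdpos)
  obtain ⟨t, htpos, htIoc⟩ := (hev2.and (Filter.eventually_mem_set.mpr hIoc_mem)).exists
  have hfs0 : f s = 0 := by simp [f, hpeq]
  have hft : f t < 0 := sub_neg.mpr (hnot t htIoc.1 htIoc.2)
  rw [slope_def_field] at htpos
  rw [hfs0] at htpos
  have hts : 0 < t - s := sub_pos.mpr htIoc.1
  have : (f t - 0) / (t - s) < 0 := div_neg_of_neg_of_pos (by linarith) hts
  linarith
end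

section
/- Let g : [0,1] → ℝ be absolutely continuous with g(0) = 0, and suppose that almost everywhere on [0,1], g(t) ≤ 0 implies g'(t) ≥ 0. Then g(t) ≥ 0 for all t ∈ [0,1]. -/
open MeasureTheory intervalIntegral

theorem ac_comparison_lemma
    (g g' : ℝ → ℝ)
    (h0 : g 0 = 0)
    (hint : IntervalIntegrable g' volume 0 1)
    (hftc : ∀ a ∈ Set.Icc (0:ℝ) 1, ∀ b ∈ Set.Icc (0:ℝ) 1, a ≤ b →
      g b - g a = ∫ t in a..b, g' t)
    (hae : ∀ᵐ t ∂(volume.restrict (Set.Icc (0:ℝ) 1)), g t ≤ 0 → 0 ≤ g' t) :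
    ∀ t ∈ Set.Icc (0:ℝ) 1, 0 ≤ g t := by
  -- continuity of g on [0,1]
  have hcontF : ContinuousOn (fun x => ∫ t in (0:ℝ)..x, g' t) (Set.Icc 0 1) := by
    have := intervalIntegral.continuousOn_primitive_interval'
      (a := (0:ℝ)) (b₁ := (0:ℝ)) (b₂ := (1:ℝ)) hint (by simp [Set.left_mem_uIcc])
    simpa [Set.uIcc_of_le (by norm_num : (0:ℝ) ≤ 1)] using this
  have hg_eq : ∀ x ∈ Set.Icc (0:ℝ) 1, g x = ∫ t in (0:ℝ)..x, g' t := by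
    intro x hx
    have := hftc 0 (by simp) x hx hx.1
    simpa [h0] using this
  have hcont : ContinuousOn g (Set.Icc (0:ℝ) 1) := hcontF.congr hg_eq
  intro t₀ ht₀
  by_contra hneg
  push_neg at hneg
  set S : Set ℝ := Set.Icc 0 t₀ ∩ g ⁻¹' (Set.Ici 0) with hS
  have hIcc_sub : Set.Icc (0:ℝ) t₀ ⊆ Set.Icc 0 1 := Set.Icc_subset_Icc le_rfl ht₀.2
  have hSclosed : IsClosed S :=
    (hcont.mono hIcc_sub).preimage_isClosed_of_isClosed isClosed_Icc isClosed_Ici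
  have hSne : S.Nonempty := ⟨0, ⟨le_rfl, ht₀.1⟩, by simp [h0]⟩
  have hSbdd : BddAbove S := ⟨t₀, fun x hx => hx.1.2⟩
  set t₁ := sSup S with ht₁def
  have ht₁S : t₁ ∈ S := hSclosed.csSup_mem hSne hSbdd
  have ht₁Icc : t₁ ∈ Set.Icc (0:ℝ) 1 := hIcc_sub ht₁S.1
  have hgt₁ : 0 ≤ g t₁ := ht₁S.2
  have ht₁t₀ : t₁ ≤ t₀ := ht₁S.1.2
  -- g ≤ 0 on (t₁, t₀]
  have hgle : ∀ t ∈ Set.Ioc t₁ t₀, g t ≤ 0 := by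
    intro t ht
    by_contra h
    push_neg at h
    have htS : t ∈ S := ⟨⟨ht₁S.1.1.trans ht.1.le, ht.2⟩, h.le⟩
    exact absurd (le_csSup hSbdd htS) (not_le.2 ht.1)
  -- g' ≥ 0 a.e. on Icc t₁ t₀
  have hae' : ∀ᵐ t ∂(volume.restrict (Set.Icc t₁ t₀)), g t ≤ 0 → 0 ≤ g' t :=
    ae_restrict_of_ae_restrict_of_subset (Set.Icc_subset_Icc ht₁Icc.1 ht₀.2) hae
  have hmem : ∀ᵐ t ∂(volume.restrict (Set.Icc t₁ t₀)), t ∈ Set.Icc t₁ t₀ :=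
    ae_restrict_mem measurableSet_Icc
  have hne : ∀ᵐ t ∂(volume.restrict (Set.Icc t₁ t₀)), t ≠ t₁ := by
    rw [Filter.eventually_iff, mem_ae_iff]
    have : {x : ℝ | x ≠ t₁}ᶜ = {t₁} := by ext x; simp
    rw [this, Measure.restrict_apply (measurableSet_singleton t₁)]
    exact measure_mono_null Set.inter_subset_left (Real.volume_singleton)
  have hnn : 0 ≤ᵐ[volume.restrict (Set.Icc t₁ t₀)] g' := by
    filter_upwards [hae', hmem, hne] with t h1 h2 h3
    exact h1 (hgle t ⟨lt_of_le_of_ne h2.1 (Ne.symm h3), h2.2⟩)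
  have hint' : 0 ≤ ∫ t in t₁..t₀, g' t :=
    intervalIntegral.integral_nonneg_of_ae_restrict ht₁t₀ hnn
  have := hftc t₁ ht₁Icc t₀ ht₀ ht₁t₀
  linarith
end

section
/- For fixed z ∈ (0,1], the function α(t) = 1/(1 − e^{−t}) − z/t on [z, 1] attains its maximum at an endpoint t = z or t = 1. -/
open Real

lemma G_hasDeriv (x : ℝ) :
    HasDerivAt (fun x : ℝ => x * (Real.exp x + Real.exp (-x)) - (Real.exp x - Real.exp (-x)))
      (x * (Real.exp x - Real.exp (-x))) x := by
  have hA : HasDerivAt Real.exp (Real.exp x) x := Real.hasDerivAt_exp x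
  have hB : HasDerivAt (fun x : ℝ => Real.exp (-x)) (Real.exp (-x) * (-1)) x :=
    (hasDerivAt_id x).neg.exp
  have h := ((hasDerivAt_id x).mul (hA.add hB)).sub (hA.sub hB)
  refine h.congr_deriv ?_
  simp only [Pi.add_apply, Pi.sub_apply, id_eq]
  ring

lemma G_nonneg (x : ℝ) (hx : 0 ≤ x) :
    0 ≤ x * (Real.exp x + Real.exp (-x)) - (Real.exp x - Real.exp (-x)) := by
  set G := fun x : ℝ => x * (Real.exp x + Real.exp (-x)) - (Real.exp x - Real.exp (-x)) with hG
  have hmono : MonotoneOn G (Set.Ici (0:ℝ)) := by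
    apply monotoneOn_of_deriv_nonneg (convex_Ici 0)
    · exact fun y _ => (G_hasDeriv y).differentiableAt.continuousAt.continuousWithinAt
    · exact fun y _ => (G_hasDeriv y).differentiableAt.differentiableWithinAt
    · intro y hy
      rw [interior_Ici] at hy
      rw [(G_hasDeriv y).deriv]
      have h1 : Real.exp (-y) ≤ Real.exp y := Real.exp_le_exp.mpr (by linarith [(Set.mem_Ioi.mp hy).le])
      nlinarith [(Set.mem_Ioi.mp hy).le]
  have h0 : G 0 = 0 := by simp [hG]
  have := hmono (Set.self_mem_Ici) (Set.mem_Ici.mpr hx) hx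
  rw [h0] at this
  exact this

lemma F_hasDeriv (x : ℝ) :
    HasDerivAt (fun x : ℝ => x * (Real.exp x - Real.exp (-x)) - 2 * (Real.exp x + Real.exp (-x)) + 4)
      (x * (Real.exp x + Real.exp (-x)) - (Real.exp x - Real.exp (-x))) x := by
  have hA : HasDerivAt Real.exp (Real.exp x) x := Real.hasDerivAt_exp x
  have hB : HasDerivAt (fun x : ℝ => Real.exp (-x)) (Real.exp (-x) * (-1)) x :=
    (hasDerivAt_id x).neg.exp
  have h := ((((hasDerivAt_id x).mul (hA.sub hB)).sub ((hA.add hB).const_mul 2)).add_const 4)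
  refine h.congr_deriv ?_
  simp only [Pi.add_apply, Pi.sub_apply, id_eq]
  ring

lemma F_nonneg (x : ℝ) (hx : 0 ≤ x) :
    0 ≤ x * (Real.exp x - Real.exp (-x)) - 2 * (Real.exp x + Real.exp (-x)) + 4 := by
  set F := fun x : ℝ => x * (Real.exp x - Real.exp (-x)) - 2 * (Real.exp x + Real.exp (-x)) + 4 with hF
  have hmono : MonotoneOn F (Set.Ici (0:ℝ)) := by
    apply monotoneOn_of_deriv_nonneg (convex_Ici 0)
    · exact fun y _ => (F_hasDeriv y).differentiableAt.continuousAt.continuousWithinAt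
    · exact fun y _ => (F_hasDeriv y).differentiableAt.differentiableWithinAt
    · intro y hy
      rw [interior_Ici] at hy
      rw [(F_hasDeriv y).deriv]
      exact G_nonneg y hy.le
  have h0 : F 0 = 0 := by simp [hF]; ring
  have := hmono (Set.self_mem_Ici) (Set.mem_Ici.mpr hx) hx
  rw [h0] at this
  exact this

lemma ratio_mono : MonotoneOn (fun t : ℝ => (Real.exp t - 2 + Real.exp (-t)) / t ^ 2)
    (Set.Ioi (0:ℝ)) := by
  have hd : ∀ t : ℝ, 0 < t →
      HasDerivAt (fun t : ℝ => (Real.exp t - 2 + Real.exp (-t)) / t ^ 2)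
        (((Real.exp t + Real.exp (-t) * (-1)) * t ^ 2 -
          (Real.exp t - 2 + Real.exp (-t)) * ((2:ℕ) * t ^ 1)) / (t ^ 2) ^ 2) t := by
    intro t ht
    have hA : HasDerivAt Real.exp (Real.exp t) t := Real.hasDerivAt_exp t
    have hB : HasDerivAt (fun x : ℝ => Real.exp (-x)) (Real.exp (-t) * (-1)) t :=
      (hasDerivAt_id t).neg.exp
    exact ((hA.sub_const 2).add hB).div (hasDerivAt_pow 2 t) (by positivity)
  apply monotoneOn_of_deriv_nonneg (convex_Ioi 0)
  · intro y hy
    exact (hd y hy).differentiableAt.continuousAt.continuousWithinAt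
  · intro y hy
    rw [interior_Ioi] at hy
    exact (hd y hy).differentiableAt.differentiableWithinAt
  · intro y hy
    rw [interior_Ioi] at hy
    rw [(hd y hy).deriv]
    apply div_nonneg _ (by positivity)
    have hy' : (0:ℝ) < y := hy
    have hF := F_nonneg y hy'.le
    have := mul_nonneg hy'.le hF
    push_cast
    nlinarith [this]

lemma alphaDeriv (z u : ℝ) (hu : 0 < u) :
    HasDerivAt (fun t : ℝ => 1 / (1 - Real.exp (-t)) - z / t)
      (z / u ^ 2 - Real.exp (-u) / (1 - Real.exp (-u)) ^ 2) u := by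
  have h1 : (1 : ℝ) - Real.exp (-u) ≠ 0 := by
    have := Real.exp_lt_one_iff.mpr (by linarith : -u < 0)
    linarith
  have h2 : HasDerivAt (fun t : ℝ => Real.exp (-t)) (Real.exp (-u) * (-1)) u :=
    ((hasDerivAt_id u).neg.exp)
  have h3 : HasDerivAt (fun t : ℝ => 1 - Real.exp (-t)) (-(Real.exp (-u) * (-1))) u :=
    h2.const_sub 1
  have h4 := h3.inv h1
  have h5 : HasDerivAt (fun t : ℝ => z / t) (z * (-1 / u ^ 2)) u := by
    simpa [div_eq_mul_inv] using (hasDerivAt_inv hu.ne').const_mul z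
  have h6 := h4.sub h5
  have hfun : (fun t : ℝ => 1 / (1 - Real.exp (-t)) - z / t)
      = fun x => (1 - Real.exp (-x))⁻¹ - z / x := by
    funext x; rw [one_div]
  rw [hfun]
  have heq : z / u ^ 2 - Real.exp (-u) / (1 - Real.exp (-u)) ^ 2
      = - -(Real.exp (-u) * -1) / (1 - Real.exp (-u)) ^ 2 - z * (-1 / u ^ 2) := by
    field_simp
    ring
  rw [heq]
  exact h6

lemma E_pos (s : ℝ) (hs : 0 < s) : 0 < Real.exp s - 2 + Real.exp (-s) := by
  have h1 : 1 < Real.exp s := by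
    rw [← Real.exp_zero]; exact Real.exp_lt_exp.mpr hs
  have h2 : Real.exp s * Real.exp (-s) = 1 := by
    rw [← Real.exp_add]; simp
  nlinarith [sq_nonneg (Real.exp s - 1)]

theorem alpha_max_at_endpoint
    (z : ℝ) (hz0 : 0 < z) (hz1 : z ≤ 1) :
    ∀ t ∈ Set.Icc z 1,
      1 / (1 - Real.exp (-t)) - z / t ≤
        max (1 / (1 - Real.exp (-z)) - z / z)
            (1 / (1 - Real.exp (-1)) - z / 1) := by
  intro t ht
  obtain ⟨htz, ht1⟩ := ht
  have ht0 : 0 < t := lt_of_lt_of_le hz0 htz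
  set E : ℝ → ℝ := fun s => Real.exp s - 2 + Real.exp (-s) with hE
  set α : ℝ → ℝ := fun t => 1 / (1 - Real.exp (-t)) - z / t with hα
  -- sign of derivative
  have hderiv_le : ∀ x : ℝ, 0 < x → z * E x ≤ x ^ 2 → deriv α x ≤ 0 := by
    intro x hx hzx
    rw [(alphaDeriv z x hx).deriv]
    have hEx := E_pos x hx
    have h2 : Real.exp x * Real.exp (-x) = 1 := by rw [← Real.exp_add]; simp
    have hid : E x * Real.exp (-x) = (1 - Real.exp (-x)) ^ 2 := by
      simp only [hE]; nlinarith [h2]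
    have h3 : Real.exp (-x) / (1 - Real.exp (-x)) ^ 2 = 1 / E x := by
      rw [← hid]; field_simp
    rw [h3]
    rw [sub_nonpos, div_le_div_iff₀ (by positivity) hEx]
    simp only [hE] at hzx
    nlinarith [hzx]
  have hderiv_ge : ∀ x : ℝ, 0 < x → x ^ 2 ≤ z * E x → 0 ≤ deriv α x := by
    intro x hx hzx
    rw [(alphaDeriv z x hx).deriv]
    have hEx := E_pos x hx
    have h2 : Real.exp x * Real.exp (-x) = 1 := by rw [← Real.exp_add]; simp
    have hid : E x * Real.exp (-x) = (1 - Real.exp (-x)) ^ 2 := by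
      simp only [hE]; nlinarith [h2]
    have h3 : Real.exp (-x) / (1 - Real.exp (-x)) ^ 2 = 1 / E x := by
      rw [← hid]; field_simp
    rw [h3]
    rw [sub_nonneg, div_le_div_iff₀ hEx (by positivity)]
    simp only [hE] at hzx
    nlinarith [hzx]
  rcases le_or_gt (z * E t) (t ^ 2) with hcase | hcase
  · -- α antitone on [z, t], so α t ≤ α z
    have hmono : AntitoneOn α (Set.Icc z t) := by
      apply antitoneOn_of_deriv_nonpos (convex_Icc z t)
      · intro y hy
        have hy0 : 0 < y := lt_of_lt_of_le hz0 hy.1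
        exact (alphaDeriv z y hy0).differentiableAt.continuousAt.continuousWithinAt
      · intro y hy
        rw [interior_Icc] at hy
        have hy0 : 0 < y := lt_trans hz0 hy.1
        exact (alphaDeriv z y hy0).differentiableAt.differentiableWithinAt
      · intro y hy
        rw [interior_Icc] at hy
        have hy0 : 0 < y := lt_trans hz0 hy.1
        apply hderiv_le y hy0
        -- z * E y ≤ y^2 using ratio monotonicity E y / y² ≤ E t / t²
        have hr := ratio_mono (Set.mem_Ioi.mpr hy0) (Set.mem_Ioi.mpr ht0) hy.2.le
        simp only at hr
        rw [div_le_div_iff₀ (by positivity) (by positivity)] at hr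
        have hEy := E_pos y hy0
        simp only [hE] at hcase ⊢
        nlinarith [mul_le_mul_of_nonneg_left hr hz0.le,
          mul_le_mul_of_nonneg_right hcase (sq_nonneg y), pow_pos ht0 2, hEy]
    have := hmono (Set.mem_Icc.mpr ⟨le_refl z, htz⟩) (Set.mem_Icc.mpr ⟨htz, le_refl t⟩) htz
    exact le_trans this (le_max_left _ _)
  · -- α monotone on [t, 1], so α t ≤ α 1
    have hmono : MonotoneOn α (Set.Icc t 1) := by
      apply monotoneOn_of_deriv_nonneg (convex_Icc t 1)
      · intro y hy
        have hy0 : 0 < y := lt_of_lt_of_le ht0 hy.1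
        exact (alphaDeriv z y hy0).differentiableAt.continuousAt.continuousWithinAt
      · intro y hy
        rw [interior_Icc] at hy
        have hy0 : 0 < y := lt_trans ht0 hy.1
        exact (alphaDeriv z y hy0).differentiableAt.differentiableWithinAt
      · intro y hy
        rw [interior_Icc] at hy
        have hy0 : 0 < y := lt_trans ht0 hy.1
        apply hderiv_ge y hy0
        have hr := ratio_mono (Set.mem_Ioi.mpr ht0) (Set.mem_Ioi.mpr hy0) hy.1.le
        simp only at hr
        rw [div_le_div_iff₀ (by positivity) (by positivity)] at hr
        have hEt := E_pos t ht0
        simp only [hE] at hcase ⊢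
        nlinarith [mul_le_mul_of_nonneg_left hr hz0.le,
          mul_le_mul_of_nonneg_right hcase.le (sq_nonneg y), pow_pos ht0 2, pow_pos hy0 2, hEt]
    have := hmono (Set.mem_Icc.mpr ⟨le_refl t, ht1⟩) (Set.mem_Icc.mpr ⟨ht1, le_refl 1⟩) ht1
    have h1 : α 1 = 1 / (1 - Real.exp (-1)) - z / 1 := rfl
    exact le_trans this (by rw [h1] at *; exact le_max_right _ _)
end
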